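/- arXiv:0912.3275 — 5 statements merged into one kernel-verified Lean document; each statement's English description precedes it below -/
import Mathlib

section
/- The decision problem DET-STRAT — given a finite directed graph G=(V,A,T,v,d) with unit arc traversal times and deadlines d(t) for each target t ∈ T, decide whether there exists a cyclic patrolling sequence visiting all targets such that the time between consecutive visits of each target t (including cycle closure) never exceeds d(t) — is NP-hard, via reduction from the Directed Hamiltonian Circuit problem: for any directed graph G_h=(V_h,A_h), setting V=T=V_h, A=A_h, and d(v)=|V_h| for all v, the resulting DET-STRAT instance has a solution if and only if G_h has a directed Hamiltonian circuit. -/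
def Wsum {V : Type*} (w : V → V → ℕ) (σ : ℕ → V) (k m : ℕ) : ℕ :=
  ∑ j ∈ Finset.Ico k m, w (σ j) (σ (j + 1))

def Feasible {V : Type*} (a : V → V → Prop) (w : V → V → ℕ) (d : V → ℕ)
    (σ : ℕ → V) (p : ℕ) : Prop :=
  0 < p ∧ (∀ k, σ (k + p) = σ k) ∧ (∀ k, a (σ k) (σ (k + 1))) ∧
    (∀ t : V, ∃ k < p, σ k = t) ∧
    (∀ t : V, ∀ k, ∃ m, k < m ∧ σ m = t ∧ Wsum w σ k m ≤ d t)

/-- A directed Hamiltonian circuit of the graph with arcs `A`: a periodic closed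
walk of period `|V|` following arcs and visiting every vertex exactly once per period. -/
def HamCircuit {V : Type*} [Fintype V] (A : V → V → Prop) : Prop :=
  ∃ σ : ℕ → V, (∀ k, σ (k + Fintype.card V) = σ k) ∧ (∀ k, A (σ k) (σ (k + 1))) ∧
    ∀ v : V, ∃! j, j < Fintype.card V ∧ σ j = v

lemma wsum_one {V : Type*} (σ : ℕ → V) (k m : ℕ) :
    Wsum (fun _ _ => 1) σ k m = m - k := by
  simp [Wsum]

/-- Correctness of the NP-hardness reduction from Directed Hamiltonian Circuit to
DET-STRAT: with unit arc weights and every deadline equal to `|V|`, the DET-STRAT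
instance has a solution iff the graph has a directed Hamiltonian circuit. -/
theorem detStrat_iff_hamCircuit {V : Type*} [Fintype V] [Nonempty V]
    (A : V → V → Prop) :
    (∃ σ p, Feasible A (fun _ _ => 1) (fun _ => Fintype.card V) σ p) ↔ HamCircuit A := by
  set n := Fintype.card V with hn
  have hnpos : 0 < n := Fintype.card_pos
  constructor
  · rintro ⟨σ, p, -, -, harc, -, hdl⟩
    have hnext : ∀ (t : V) (k : ℕ), ∃ m, k < m ∧ m ≤ k + n ∧ σ m = t := by
      intro t k
      obtain ⟨m, hkm, hσ, hw⟩ := hdl t k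
      rw [wsum_one] at hw
      have hw' : m - k ≤ n := hw
      exact ⟨m, hkm, by omega, hσ⟩
    have hsurj : ∀ k, Function.Surjective (fun j : Fin n => σ (k + 1 + j)) := by
      intro k t
      obtain ⟨m, h1, h2, h3⟩ := hnext t k
      refine ⟨⟨m - (k + 1), by omega⟩, ?_⟩
      show σ (k + 1 + (m - (k + 1))) = t
      rw [show k + 1 + (m - (k + 1)) = m by omega]
      exact h3
    have hinj : ∀ k, Function.Injective (fun j : Fin n => σ (k + 1 + j)) := by
      intro k
      exact ((Fintype.bijective_iff_surjective_and_card _).mpr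
        ⟨hsurj k, by rw [Fintype.card_fin, hn]⟩).injective
    have hper1 : ∀ k, σ (k + 1 + n) = σ (k + 1) := by
      intro k
      obtain ⟨m, h1, h2, h3⟩ := hnext (σ (k + 1)) (k + 1)
      rcases eq_or_lt_of_le h2 with h | h
      · rw [show k + 1 + n = m by omega]; exact h3
      · exfalso
        have heq : (⟨m - (k + 1), by omega⟩ : Fin n) = ⟨0, hnpos⟩ := by
          apply hinj k
          show σ (k + 1 + (m - (k + 1))) = σ (k + 1 + 0)
          rw [show k + 1 + (m - (k + 1)) = m by omega]
          simpa using h3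
        have := congrArg Fin.val heq
        simp at this
        omega
    refine ⟨fun k => σ (k + 1), ?_, fun k => harc (k + 1), ?_⟩
    · intro k
      show σ (k + n + 1) = σ (k + 1)
      rw [show k + n + 1 = k + 1 + n by omega]
      exact hper1 k
    · intro v
      obtain ⟨j, hj⟩ := hsurj 0 v
      refine ⟨j.val, ⟨j.isLt, ?_⟩, ?_⟩
      · show σ (j.val + 1) = v
        rw [show j.val + 1 = 0 + 1 + j.val by omega]
        exact hj
      · rintro j' ⟨hj', hj'v⟩
        have hj'v' : σ (j' + 1) = v := hj'v
        have heq : (⟨j', hj'⟩ : Fin n) = j := by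
          apply hinj 0
          show σ (0 + 1 + j') = σ (0 + 1 + j.val)
          rw [show 0 + 1 + j' = j' + 1 by omega]
          rw [hj'v']
          exact hj.symm
        exact congrArg Fin.val heq
  · rintro ⟨σ, hper, harc, hvis⟩
    refine ⟨σ, n, hnpos, hper, harc, ?_, ?_⟩
    · intro t
      obtain ⟨j, ⟨hj, hjt⟩, -⟩ := hvis t
      exact ⟨j, hj, hjt⟩
    · intro t k
      obtain ⟨j, ⟨hj, hjt⟩, -⟩ := hvis t
      have key : ∀ k, ∃ m, k < m ∧ m ≤ k + n ∧ σ m = t := by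
        intro k
        induction k with
        | zero =>
          rcases Nat.eq_zero_or_pos j with h0 | h0
          · refine ⟨n, hnpos, by omega, ?_⟩
            rw [show n = 0 + n by omega, hper, ← h0]
            exact hjt
          · exact ⟨j, h0, by omega, hjt⟩
        | succ k ih =>
          obtain ⟨m, h1, h2, h3⟩ := ih
          rcases eq_or_lt_of_le (Nat.succ_le_of_lt h1) with h | h
          · refine ⟨m + n, by omega, by omega, ?_⟩
            rw [hper]; exact h3
          · exact ⟨m, h, by omega, h3⟩
      obtain ⟨m, h1, h2, h3⟩ := key k
      exact ⟨m, h1, h3, by rw [wsum_one]; exact (by omega : m - k ≤ n)⟩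
end

section
/- Consider a linear (path/corridor) graph on vertices 1,…,n with arcs between consecutive vertices, arc weights w, and deadlines d. If the DET-STRAT problem on this linear graph admits any feasible cyclic patrolling solution, then the 'sweep' sequence ⟨1,2,…,n,n−1,…,2,1⟩ (visiting vertices in linear order and back) is itself a feasible solution. -/
/-- Adjacency of the linear (path/corridor) graph on `n` vertices: `i` and `j`
are adjacent iff they are consecutive. -/
def LinAdj (n : ℕ) (i j : Fin n) : Prop := (i : ℕ) + 1 = (j : ℕ) ∨ (j : ℕ) + 1 = (i : ℕ)

/-- The sweep sequence `⟨1,2,…,n,n−1,…,2,1⟩` (0-indexed), of period `2n−2`. -/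
def sweep (n : ℕ) (hn : 0 < n) (k : ℕ) : Fin n :=
  ⟨min (k % (2 * (n - 1))) (2 * (n - 1) - k % (2 * (n - 1))), by
    by_cases h2 : 2 * (n - 1) = 0
    · rw [h2]; simpa using hn
    · have hr : k % (2 * (n - 1)) < 2 * (n - 1) := Nat.mod_lt _ (Nat.pos_of_ne_zero h2)
      set r := k % (2 * (n - 1))
      omega⟩

/-!
On a path, a walk that leaves `t`, reaches `u` and returns to `t` crosses every edge between
`t` and `u` once in each direction. So in any feasible patrol the deadline `d t` is at least the
cost of the round trip from `t` to the right end `n - 1`, and of the one from `t` to the left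
end `0`. Between two consecutive visits to `t` the sweep performs exactly one of these two round
trips, hence meets every deadline.
-/

open Finset

section Revisits

variable {V : Type*} (w : V → V → ℕ) (σ : ℕ → V)

lemma Wsum_add {k l m : ℕ} (hkl : k ≤ l) (hlm : l ≤ m) :
    Wsum w σ k l + Wsum w σ l m = Wsum w σ k m :=
  sum_Ico_consecutive _ hkl hlm

lemma Wsum_mono {k m k' m' : ℕ} (hk : k' ≤ k) (hm : m ≤ m') :
    Wsum w σ k m ≤ Wsum w σ k' m' :=
  sum_le_sum_of_subset (Ico_subset_Ico hk hm)

lemma Wsum_succ {k m : ℕ} (hkm : k ≤ m) :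
    Wsum w σ k (m + 1) = Wsum w σ k m + w (σ m) (σ (m + 1)) :=
  sum_Ico_succ_top hkm _

variable {σ}

lemma Wsum_add_period {p : ℕ} (hσ : Function.Periodic σ p) (k m : ℕ) :
    Wsum w σ (k + p) (m + p) = Wsum w σ k m := by
  simp only [Wsum, ← sum_Ico_add', add_right_comm _ p 1, hσ _]

lemma exists_revisit_of_lt_period {p : ℕ} (hp : 0 < p) (hσ : Function.Periodic σ p)
    {t : V} {D : ℕ} (h : ∀ k < p, ∃ m, k < m ∧ σ m = t ∧ Wsum w σ k m ≤ D) (k : ℕ) :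
    ∃ m, k < m ∧ σ m = t ∧ Wsum w σ k m ≤ D := by
  induction k using Nat.strong_induction_on with
  | _ k ih =>
    rcases lt_or_ge k p with hk | hk
    · exact h k hk
    · obtain ⟨m, hkm, hm, hW⟩ := ih (k - p) (by omega)
      refine ⟨m + p, by omega, by rw [hσ, hm], ?_⟩
      rwa [← Nat.sub_add_cancel hk, Wsum_add_period w hσ]

lemma exists_return_through {t u : V} {D : ℕ}
    (ht : ∀ k, ∃ m, k < m ∧ σ m = t ∧ Wsum w σ k m ≤ D) (hu : ∀ k, ∃ m, k < m ∧ σ m = u) :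
    ∃ k l m, k ≤ l ∧ l ≤ m ∧ σ k = t ∧ σ l = u ∧ σ m = t ∧ Wsum w σ k m ≤ D := by
  classical
  obtain ⟨k₀, -, hk₀, -⟩ := ht 0
  obtain ⟨l, hk₀l, hl⟩ := hu k₀
  set k := Nat.findGreatest (σ · = t) l
  have hk : σ k = t := Nat.findGreatest_spec (P := (σ · = t)) hk₀l.le hk₀
  obtain ⟨m, hkm, hm, hW⟩ := ht k
  have hlm : l < m := by
    by_contra! hml
    exact (Nat.le_findGreatest hml hm).not_gt hkm
  exact ⟨k, l, m, Nat.findGreatest_le l, hlm.le, hk, hl, hm, hW⟩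

end Revisits

section PathWalk

def roundTrip (W : ℕ → ℕ → ℕ) (a b : ℕ) : ℕ :=
  ∑ c ∈ Ico a b, (W c (c + 1) + W (c + 1) c)

variable (W : ℕ → ℕ → ℕ) {σ : ℕ → ℕ} (hσ : ∀ j, σ j + 1 = σ (j + 1) ∨ σ (j + 1) + 1 = σ j)
include hσ

lemma sum_Ico_up_le_Wsum {k m : ℕ} (hkm : k ≤ m) :
    ∑ c ∈ Ico (σ k) (σ m), W c (c + 1) ≤ Wsum W σ k m := by
  induction m, hkm using Nat.le_induction with
  | base => simp
  | succ m hkm ih =>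
    rw [Wsum_succ W σ hkm]
    rcases hσ m with hup | hdown
    · rw [← hup]
      rcases le_or_gt (σ k) (σ m) with hle | hlt
      · rw [sum_Ico_succ_top hle]
        exact Nat.add_le_add_right ih _
      · rw [Ico_eq_empty_of_le hlt, sum_empty]
        exact Nat.zero_le _
    · calc ∑ c ∈ Ico (σ k) (σ (m + 1)), W c (c + 1)
          ≤ ∑ c ∈ Ico (σ k) (σ m), W c (c + 1) :=
            sum_le_sum_of_subset (Ico_subset_Ico_right (by omega))
        _ ≤ _ := ih.trans (Nat.le_add_right _ _)

lemma sum_Ico_down_le_Wsum {k m : ℕ} (hkm : k ≤ m) :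
    ∑ c ∈ Ico (σ m) (σ k), W (c + 1) c ≤ Wsum W σ k m := by
  induction m, hkm using Nat.le_induction with
  | base => simp
  | succ m hkm ih =>
    rw [Wsum_succ W σ hkm]
    rcases hσ m with hup | hdown
    · calc ∑ c ∈ Ico (σ (m + 1)) (σ k), W (c + 1) c
          ≤ ∑ c ∈ Ico (σ m) (σ k), W (c + 1) c :=
            sum_le_sum_of_subset (Ico_subset_Ico_left (by omega))
        _ ≤ _ := ih.trans (Nat.le_add_right _ _)
    · rcases lt_or_ge (σ (m + 1)) (σ k) with hlt | hge
      · rw [sum_eq_sum_Ico_succ_bot hlt, add_comm, hdown]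
        exact Nat.add_le_add_right ih _
      · rw [Ico_eq_empty_of_le hge, sum_empty]
        exact Nat.zero_le _

lemma roundTrip_le_Wsum {k l m : ℕ} (hkl : k ≤ l) (hlm : l ≤ m) (hmk : σ m = σ k) :
    roundTrip W (min (σ k) (σ l)) (max (σ k) (σ l)) ≤ Wsum W σ k m := by
  have hup := sum_Ico_up_le_Wsum W hσ hkl
  have hdown := sum_Ico_down_le_Wsum W hσ hkl
  have hup' := sum_Ico_up_le_Wsum W hσ hlm
  have hdown' := sum_Ico_down_le_Wsum W hσ hlm
  rw [hmk] at hup' hdown'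
  rw [← Wsum_add W σ hkl hlm, roundTrip, sum_add_distrib]
  rcases le_total (σ k) (σ l) with h | h
  · rw [min_eq_left h, max_eq_right h]
    exact add_le_add hup hdown'
  · rw [min_eq_right h, max_eq_left h, add_comm]
    exact add_le_add hdown hup'

end PathWalk

section Zigzag

def zigzag (h k : ℕ) : ℕ := min (k % (2 * h)) (2 * h - k % (2 * h))

variable (h : ℕ)

lemma zigzag_periodic : Function.Periodic (zigzag h) (2 * h) := fun k => by
  simp only [zigzag, Nat.add_mod_right]

lemma zigzag_of_le {k : ℕ} (hk : k ≤ h) : zigzag h k = k := by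
  rcases Nat.eq_zero_or_pos h with rfl | hh
  · simp [zigzag, Nat.le_zero.mp hk]
  · rw [zigzag, Nat.mod_eq_of_lt (by omega)]
    omega

lemma zigzag_of_ge {k : ℕ} (hk : h ≤ k) (hk' : k ≤ 2 * h) : zigzag h k = 2 * h - k := by
  rcases hk'.lt_or_eq with hlt | rfl
  · rw [zigzag, Nat.mod_eq_of_lt hlt]
    omega
  · simp [zigzag]

lemma zigzag_step {h : ℕ} (hh : 0 < h) (k : ℕ) :
    zigzag h k + 1 = zigzag h (k + 1) ∨ zigzag h (k + 1) + 1 = zigzag h k := by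
  have hk := Nat.mod_lt k (show 0 < 2 * h by omega)
  rw [zigzag, zigzag, Nat.add_mod_eq_ite, Nat.mod_eq_of_lt (show 1 < 2 * h by omega)]
  split_ifs <;> omega

variable (W : ℕ → ℕ → ℕ)

lemma Wsum_zigzag_of_le {a b : ℕ} (hb : b ≤ h) :
    Wsum W (zigzag h) a b = ∑ c ∈ Ico a b, W c (c + 1) :=
  sum_congr rfl fun j hj => by
    rw [mem_Ico] at hj
    rw [zigzag_of_le h (by omega), zigzag_of_le h (by omega)]

lemma Wsum_zigzag_of_ge {a b : ℕ} (ha : h ≤ a) (hb : b ≤ 2 * h) :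
    Wsum W (zigzag h) a b = ∑ c ∈ Ico (2 * h - b) (2 * h - a), W (c + 1) c := by
  rcases Nat.eq_zero_or_pos h with rfl | hh
  · obtain rfl : b = 0 := by omega
    simp [Wsum]
  rw [show 2 * h = 2 * h - 1 + 1 by omega, ← sum_Ico_reflect _ _ (by omega), Wsum]
  refine sum_congr rfl fun j hj => ?_
  rw [mem_Ico] at hj
  rw [zigzag_of_ge h (by omega) (by omega), zigzag_of_ge h (by omega) (by omega)]
  congr 1 <;> omega

lemma Wsum_zigzag_right {t : ℕ} (ht : t ≤ h) :
    Wsum W (zigzag h) t (2 * h - t) = roundTrip W t h := by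
  rw [← Wsum_add W _ ht (by omega), Wsum_zigzag_of_le h W le_rfl,
    Wsum_zigzag_of_ge h W le_rfl (by omega), Nat.sub_sub_self (by omega : t ≤ 2 * h),
    show 2 * h - h = h by omega, roundTrip, sum_add_distrib]

lemma Wsum_zigzag_left {t : ℕ} (ht : t ≤ h) :
    Wsum W (zigzag h) (2 * h - t) (2 * h + t) = roundTrip W 0 t := by
  have hshift : Wsum W (zigzag h) (2 * h) (2 * h + t) = Wsum W (zigzag h) 0 t := by
    simpa [add_comm] using Wsum_add_period W (zigzag_periodic h) 0 t
  rw [← Wsum_add W _ (Nat.sub_le _ _) (Nat.le_add_right _ _), hshift,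
    Wsum_zigzag_of_ge h W (by omega) le_rfl, Wsum_zigzag_of_le h W ht, Nat.sub_self,
    Nat.sub_sub_self (by omega : t ≤ 2 * h), roundTrip, sum_add_distrib, add_comm]

lemma exists_zigzag_revisit {h t D : ℕ} (hh : 0 < h) (ht : t ≤ h)
    (hR : roundTrip W t h ≤ D) (hL : roundTrip W 0 t ≤ D) (k : ℕ) :
    ∃ m, k < m ∧ zigzag h m = t ∧ Wsum W (zigzag h) k m ≤ D := by
  refine exists_revisit_of_lt_period W (by omega) (zigzag_periodic h) (fun k hk => ?_) k
  rcases lt_or_ge k t with hkt | htk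
  · refine ⟨t, hkt, zigzag_of_le h ht, ?_⟩
    calc Wsum W (zigzag h) k t ≤ Wsum W (zigzag h) 0 t := Wsum_mono W _ (Nat.zero_le _) le_rfl
      _ = ∑ c ∈ Ico 0 t, W c (c + 1) := Wsum_zigzag_of_le h W ht
      _ ≤ roundTrip W 0 t := sum_le_sum fun _ _ => Nat.le_add_right _ _
      _ ≤ D := hL
  rcases lt_or_ge k (2 * h - t) with hkt' | htk'
  · refine ⟨2 * h - t, hkt', by rw [zigzag_of_ge h (by omega) (by omega)]; omega, ?_⟩
    exact (Wsum_mono W _ htk le_rfl).trans ((Wsum_zigzag_right h W ht).trans_le hR)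
  · refine ⟨2 * h + t, by omega, by rw [add_comm, zigzag_periodic h, zigzag_of_le h ht], ?_⟩
    exact (Wsum_mono W _ htk' le_rfl).trans ((Wsum_zigzag_left h W ht).trans_le hL)

end Zigzag

section LinearGraph

/-- `w` extended by zero to `ℕ`, so that walks on the path can be read as walks on `ℕ`. -/
def natWeight {n : ℕ} (w : Fin n → Fin n → ℕ) (i j : ℕ) : ℕ :=
  if h : i < n ∧ j < n then w ⟨i, h.1⟩ ⟨j, h.2⟩ else 0

lemma Wsum_val {n : ℕ} (w : Fin n → Fin n → ℕ) (σ : ℕ → Fin n) (k m : ℕ) :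
    Wsum w σ k m = Wsum (natWeight w) (fun j => (σ j : ℕ)) k m :=
  sum_congr rfl fun j _ => by simp [natWeight]

lemma sweep_val {n : ℕ} (hn : 0 < n) (k : ℕ) : (sweep n hn k : ℕ) = zigzag (n - 1) k := rfl

lemma roundTrip_le_deadline {n : ℕ} {w : Fin n → Fin n → ℕ} {d : Fin n → ℕ} {σ : ℕ → Fin n}
    (hadj : ∀ k, LinAdj n (σ k) (σ (k + 1)))
    (hdl : ∀ t k, ∃ m, k < m ∧ σ m = t ∧ Wsum w σ k m ≤ d t) (t u : Fin n) :
    roundTrip (natWeight w) (min t u) (max t u) ≤ d t := by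
  obtain ⟨k, l, m, hkl, hlm, hk, hl, hm, hW⟩ :=
    exists_return_through w (hdl t) fun k => (hdl u k).imp fun _ h => ⟨h.1, h.2.1⟩
  have hround :=
    roundTrip_le_Wsum (natWeight w) hadj hkl hlm (congrArg Fin.val (hm.trans hk.symm))
  rw [← Wsum_val, hk, hl] at hround
  exact hround.trans hW

end LinearGraph

/-- If the DET-STRAT problem on a linear graph admits any feasible cyclic
patrolling solution, then the sweep sequence is itself a feasible solution. -/
theorem linear_sweep_feasible (n : ℕ) (hn : 2 ≤ n)
    (w : Fin n → Fin n → ℕ) (d : Fin n → ℕ)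
    (h : ∃ σ p, Feasible (LinAdj n) w d σ p) :
    Feasible (LinAdj n) w d (sweep n (by omega)) (2 * n - 2) := by
  obtain ⟨σ, p, -, -, hadj, -, hdl⟩ := h
  have hh : 0 < n - 1 := by omega
  refine ⟨by omega, fun k => Fin.ext ?_, fun k => zigzag_step hh k,
    fun t => ⟨t, by omega, Fin.ext (zigzag_of_le _ (by omega))⟩, fun t k => ?_⟩
  · rw [sweep_val, sweep_val, show 2 * n - 2 = 2 * (n - 1) by omega, zigzag_periodic]
  have ht : (t : ℕ) ≤ n - 1 := by omega
  have hR := roundTrip_le_deadline hadj hdl t ⟨n - 1, by omega⟩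
  have hL := roundTrip_le_deadline hadj hdl t ⟨0, by omega⟩
  rw [min_eq_left ht, max_eq_right ht] at hR
  rw [min_eq_right (Nat.zero_le _), max_eq_left (Nat.zero_le _)] at hL
  obtain ⟨m, hkm, hm, hW⟩ := exists_zigzag_revisit (natWeight w) hh ht hR hL k
  exact ⟨m, hkm, Fin.ext hm, (Wsum_val w _ k m).trans_le hW⟩
end

section
/- Let (X_k) be a finite-state Markov chain on state space V with transition matrix α, let t ∈ V be an absorbing target and let i, i' ∈ V be states such that every path of length at most D from i' to t that avoids t until its endpoint must pass through i. Then the probability of reaching t within D steps starting from i' is at most the probability of reaching t within D steps starting from i. -/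
/-- `noVisit α t w i` is the probability that the Markov chain with transition
matrix `α` started at `i` does not visit `t` at any of the times `1,…,w`
(the quantity `∑_{j ≠ t} γ^{w,t}_{i,j}` of the paper). -/
def noVisit {V : Type*} [Fintype V] [DecidableEq V]
    (α : V → V → ℝ) (t : V) : ℕ → V → ℝ
  | 0, _ => 1
  | w + 1, i => ∑ j ∈ Finset.univ.filter (· ≠ t), α i j * noVisit α t w j

section aux
variable {V : Type*} [Fintype V] [DecidableEq V] (α : V → V → ℝ) (t : V)

lemma noVisit_nonneg (hnn : ∀ x y, 0 ≤ α x y) :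
    ∀ w x, 0 ≤ noVisit α t w x
  | 0, _ => by simp [noVisit]
  | w + 1, x => by
      rw [noVisit]
      exact Finset.sum_nonneg fun j _ =>
        mul_nonneg (hnn x j) (noVisit_nonneg hnn w j)

lemma sum_filter_ne_le (hnn : ∀ x y, 0 ≤ α x y) (hrow : ∀ x, ∑ y, α x y = 1)
    (x : V) : ∑ j ∈ Finset.univ.filter (· ≠ t), α x j ≤ 1 := by
  rw [← hrow x]
  exact Finset.sum_le_sum_of_subset_of_nonneg (Finset.filter_subset _ _)
    (fun j _ _ => hnn x j)

lemma noVisit_le_one (hnn : ∀ x y, 0 ≤ α x y) (hrow : ∀ x, ∑ y, α x y = 1) :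
    ∀ w x, noVisit α t w x ≤ 1
  | 0, _ => by simp [noVisit]
  | w + 1, x => by
      rw [noVisit]
      calc ∑ j ∈ Finset.univ.filter (· ≠ t), α x j * noVisit α t w j
          ≤ ∑ j ∈ Finset.univ.filter (· ≠ t), α x j * 1 :=
            Finset.sum_le_sum fun j _ =>
              mul_le_mul_of_nonneg_left (noVisit_le_one hnn hrow w j) (hnn x j)
        _ = ∑ j ∈ Finset.univ.filter (· ≠ t), α x j := by simp
        _ ≤ 1 := sum_filter_ne_le α t hnn hrow x

lemma noVisit_anti (hnn : ∀ x y, 0 ≤ α x y) (hrow : ∀ x, ∑ y, α x y = 1) :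
    ∀ w x, noVisit α t (w + 1) x ≤ noVisit α t w x
  | 0, x => by simpa [noVisit] using noVisit_le_one α t hnn hrow 1 x
  | w + 1, x => by
      rw [noVisit, noVisit]
      exact Finset.sum_le_sum fun j _ =>
        mul_le_mul_of_nonneg_left (noVisit_anti hnn hrow w j) (hnn x j)

end aux

/-- Markov-chain dominance: if every positive-probability path of length at most
`D` from `i'` to the absorbing target `t` that avoids `t` until its endpoint
must pass through `i`, then the probability of reaching `t` within `D` steps
from `i'` is at most that from `i`. -/
theorem reach_prob_dominance {V : Type*} [Fintype V] [DecidableEq V]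
    (α : V → V → ℝ) (t i i' : V) (D : ℕ)
    (hnn : ∀ x y, 0 ≤ α x y) (hrow : ∀ x, ∑ y, α x y = 1) (habs : α t t = 1)
    (hpass : ∀ (x : ℕ → V) (m : ℕ), m ≤ D → x 0 = i' → x m = t →
      (∀ j < m, 0 < α (x j) (x (j + 1))) → (∀ j < m, x j ≠ t) →
      ∃ j < m, x j = i) :
    1 - noVisit α t D i' ≤ 1 - noVisit α t D i := by
  -- define the "must pass through i" predicate
  set P : ℕ → V → Prop := fun w x =>
    ∀ (y : ℕ → V) (m : ℕ), m ≤ w → y 0 = x → y m = t →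
      (∀ j < m, 0 < α (y j) (y (j + 1))) → (∀ j < m, y j ≠ t) →
      ∃ j < m, y j = i with hP
  -- main claim
  have main : ∀ w x, P w x → noVisit α t w i ≤ noVisit α t w x := by
    intro w
    induction w with
    | zero => intro x _; simp [noVisit]
    | succ w ih =>
      intro x hx
      by_cases hxi : x = i
      · subst hxi; exact le_refl _
      have hxt : x ≠ t := by
        intro hxt
        obtain ⟨j, hj, _⟩ := hx (fun _ => x) 0 (Nat.zero_le _) rfl hxt
          (by intro j hj; omega) (by intro j hj; omega)
        omega
      have hxt0 : α x t = 0 := by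
        by_contra h
        have hpos : 0 < α x t := lt_of_le_of_ne (hnn x t) (Ne.symm h)
        obtain ⟨j, hj, hji⟩ := hx (fun k => if k = 0 then x else t) 1
          (by omega) rfl (by simp)
          (by intro j hj; interval_cases j; simpa using hpos)
          (by intro j hj; interval_cases j; simpa using hxt)
        interval_cases j
        simp at hji; exact hxi hji
      -- for every j ≠ t with α x j > 0, P w j holds
      have hstep : ∀ j, j ≠ t → 0 < α x j → P w j := by
        intro j hjt hpos y m hm hy0 hym hyp hyt
        set y' : ℕ → V := fun k => if k = 0 then x else y (k - 1) with hy'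
        obtain ⟨k, hk, hki⟩ := hx y' (m + 1) (by omega) (by simp [hy'])
          (by simp [hy', hym])
          (by
            intro k hk
            rcases Nat.eq_zero_or_pos k with h0 | h0
            · subst h0; simpa [hy', hy0] using hpos
            · have hk0 : k ≠ 0 := by omega
              have h1 : y' k = y (k - 1) := by simp [hy', hk0]
              have h2 : y' (k + 1) = y k := by simp [hy']
              rw [h1, h2]
              have := hyp (k - 1) (by omega)
              have hk1 : k - 1 + 1 = k := by omega
              rwa [hk1] at this)
          (by
            intro k hk
            rcases Nat.eq_zero_or_pos k with h0 | h0
            · subst h0; simpa [hy'] using hxt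
            · have hk0 : k ≠ 0 := by omega
              simp only [hy', hk0, ite_false, if_neg]
              exact hyt (k - 1) (by omega))
        rcases Nat.eq_zero_or_pos k with h0 | h0
        · subst h0; simp [hy'] at hki; exact absurd hki hxi
        · refine ⟨k - 1, by omega, ?_⟩
          have hk0 : k ≠ 0 := by omega
          simpa [hy', hk0] using hki
      -- sum over j ≠ t of α x j equals 1
      have hsum1 : ∑ j ∈ Finset.univ.filter (· ≠ t), α x j = 1 := by
        have := hrow x
        rw [Finset.filter_ne', Finset.sum_erase_eq_sub (Finset.mem_univ t)]
        rw [this, hxt0, sub_zero]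
      calc noVisit α t (w + 1) i ≤ noVisit α t w i :=
            noVisit_anti α t hnn hrow w i
        _ = ∑ j ∈ Finset.univ.filter (· ≠ t), α x j * noVisit α t w i := by
            rw [← Finset.sum_mul, hsum1, one_mul]
        _ ≤ ∑ j ∈ Finset.univ.filter (· ≠ t), α x j * noVisit α t w j := by
            refine Finset.sum_le_sum fun j hj => ?_
            rcases eq_or_lt_of_le (hnn x j) with h0 | hpos
            · rw [← h0]; simp
            · have hjt : j ≠ t := (Finset.mem_filter.mp hj).2
              exact mul_le_mul_of_nonneg_left (ih j (hstep j hjt hpos)) (le_of_lt hpos)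
        _ = noVisit α t (w + 1) x := by rw [noVisit]
  have := main D i' hpass
  linarith
end

section
/- In a finite two-player strategic-form game, the leader's expected utility at any leader-follower (Stackelberg) equilibrium — where the leader commits to a mixed strategy and the follower best-responds, breaking ties in the leader's favor — is at least the leader's expected utility at any Nash equilibrium of the simultaneous-move game. -/
/-- `x` is a mixed strategy over the finite strategy set `S`. -/
def Mixed {S : Type*} [Fintype S] (x : S → ℝ) : Prop :=
  (∀ s, 0 ≤ x s) ∧ ∑ s, x s = 1

/-- Expected utility `u` when the row player plays the mixed strategy `x`
and the column player plays the pure strategy `b`. -/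
noncomputable def EUp {S1 S2 : Type*} [Fintype S1] (u : S1 → S2 → ℝ)
    (x : S1 → ℝ) (b : S2) : ℝ :=
  ∑ s, x s * u s b

/-- Von Stengel–Zamir: in a finite two-player game, the leader's expected
utility at any leader-follower (Stackelberg) equilibrium `(x*, b*)` — the
leader commits to a mixed strategy and the follower best-responds, ties broken
in the leader's favor — is at least the leader's expected utility at any Nash
equilibrium `(x, y)` of the simultaneous-move game. -/
theorem stackelberg_ge_nash {S1 S2 : Type*} [Fintype S1] [Fintype S2]
    [Nonempty S1] [Nonempty S2] (u1 u2 : S1 → S2 → ℝ)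
    (xs : S1 → ℝ) (bs : S2) (hxs : Mixed xs)
    (hbr : ∀ b, EUp u2 xs b ≤ EUp u2 xs bs)
    (hopt : ∀ (x : S1 → ℝ) (b : S2), Mixed x → (∀ b', EUp u2 x b' ≤ EUp u2 x b) →
      EUp u1 x b ≤ EUp u1 xs bs)
    (x : S1 → ℝ) (y : S2 → ℝ) (hx : Mixed x) (hy : Mixed y)
    (hnash1 : ∀ x' : S1 → ℝ, Mixed x' →
      ∑ s, ∑ b, x' s * y b * u1 s b ≤ ∑ s, ∑ b, x s * y b * u1 s b)
    (hnash2 : ∀ y' : S2 → ℝ, Mixed y' →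
      ∑ s, ∑ b, x s * y' b * u2 s b ≤ ∑ s, ∑ b, x s * y b * u2 s b) :
    ∑ s, ∑ b, x s * y b * u1 s b ≤ EUp u1 xs bs := by
  classical
  -- rewrite double sums as weighted sums of EUp
  have key : ∀ (z : S2 → ℝ) (u : S1 → S2 → ℝ),
      ∑ s, ∑ b, x s * z b * u s b = ∑ b, z b * EUp u x b := by
    intro z u
    rw [Finset.sum_comm]
    unfold EUp
    simp_rw [Finset.mul_sum]
    refine Finset.sum_congr rfl fun b _ => Finset.sum_congr rfl fun s _ => by ring
  -- the max value of u2 against x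
  obtain ⟨bm, _, hbm⟩ := Finset.exists_max_image Finset.univ (fun b => EUp u2 x b)
    ⟨Classical.arbitrary S2, Finset.mem_univ _⟩
  set M := EUp u2 x bm with hM
  -- pure strategy at bm is mixed
  have hpure : Mixed (fun b => if b = bm then (1:ℝ) else 0) := by
    constructor
    · intro s; dsimp only; split <;> norm_num
    · simp
  have h2 := hnash2 _ hpure
  rw [key, key] at h2
  have hMle : M ≤ ∑ b, y b * EUp u2 x b := by
    simpa using h2
  have hleM : ∑ b, y b * EUp u2 x b ≤ M := by
    calc ∑ b, y b * EUp u2 x b ≤ ∑ b, y b * M :=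
          Finset.sum_le_sum fun b _ => mul_le_mul_of_nonneg_left (hbm b (Finset.mem_univ b)) (hy.1 b)
      _ = M := by rw [← Finset.sum_mul, hy.2, one_mul]
  -- support of y
  have hTne : (Finset.univ.filter (fun b => 0 < y b)).Nonempty := by
    by_contra h
    rw [Finset.not_nonempty_iff_eq_empty] at h
    have : ∑ b, y b = 0 := by
      refine Finset.sum_eq_zero fun b _ => ?_
      have hb : ¬ 0 < y b := by
        intro hb
        have : b ∈ Finset.univ.filter (fun b => 0 < y b) := by simp [hb]
        simp [h] at this
      linarith [hy.1 b]
    rw [hy.2] at this; norm_num at this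
  obtain ⟨b0, hb0mem, hb0max⟩ := Finset.exists_max_image _ (fun b => EUp u1 x b) hTne
  have hb0pos : 0 < y b0 := (Finset.mem_filter.mp hb0mem).2
  -- b0 is a best response to x for u2
  have hb0br : ∀ b', EUp u2 x b' ≤ EUp u2 x b0 := by
    intro b'
    have hb0M : EUp u2 x b0 = M := by
      by_contra hne
      have hlt : EUp u2 x b0 < M := lt_of_le_of_ne (hbm b0 (Finset.mem_univ b0)) hne
      have : ∑ b, y b * EUp u2 x b < ∑ b, y b * M := by
        refine Finset.sum_lt_sum (fun b _ => mul_le_mul_of_nonneg_left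
          (hbm b (Finset.mem_univ b)) (hy.1 b)) ⟨b0, Finset.mem_univ b0, ?_⟩
        exact mul_lt_mul_of_pos_left hlt hb0pos
      rw [← Finset.sum_mul, hy.2, one_mul] at this
      linarith
    rw [hb0M]
    exact hbm b' (Finset.mem_univ b')
  -- Nash payoff ≤ EUp u1 x b0
  have hnp : ∑ s, ∑ b, x s * y b * u1 s b ≤ EUp u1 x b0 := by
    rw [key]
    calc ∑ b, y b * EUp u1 x b ≤ ∑ b, y b * EUp u1 x b0 := by
          refine Finset.sum_le_sum fun b _ => ?_
          by_cases hb : 0 < y b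
          · exact mul_le_mul_of_nonneg_left (hb0max b (by simp [hb])) (le_of_lt hb)
          · have : y b = 0 := le_antisymm (not_lt.mp hb) (hy.1 b)
            simp [this]
      _ = EUp u1 x b0 := by rw [← Finset.sum_mul, hy.2, one_mul]
  exact hnp.trans (hopt x b0 hx hb0br)
end

section
/- If in a patrolling graph there exist two targets i and j such that the shortest cycle visiting both has temporal length strictly greater than both d(i) and d(j), then no feasible deterministic patrolling cycle covering both targets exists. -/
/-- If two targets `i` and `j` are such that every closed walk based at `i`
visiting `j` has temporal length strictly greater than `d i`, and every closed
walk based at `j` visiting `i` has temporal length strictly greater than `d j`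
(i.e. the shortest cycle visiting both exceeds both deadlines), then no feasible
deterministic patrolling cycle covering both targets exists. -/
theorem no_feasible_cycle_of_long_two_target_cycle {V : Type*} [Fintype V]
    (a : V → V → Prop) (w : V → V → ℕ) (d : V → ℕ) (i j : V) (hij : i ≠ j)
    (Hi : ∀ (π : ℕ → V) (m : ℕ), 0 < m → (∀ l < m, a (π l) (π (l + 1))) →
      π 0 = i → π m = i → (∃ l ≤ m, π l = j) → d i < Wsum w π 0 m)
    (Hj : ∀ (π : ℕ → V) (m : ℕ), 0 < m → (∀ l < m, a (π l) (π (l + 1))) →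
      π 0 = j → π m = j → (∃ l ≤ m, π l = i) → d j < Wsum w π 0 m) :
    ¬ ∃ σ p, Feasible a w d σ p := by
  classical
  rintro ⟨σ, p, hp, hper, hadj, hcov, hdead⟩
  obtain ⟨k₀, _, hk₀⟩ := hcov i
  obtain ⟨m'', hk₀m, hm''j, _⟩ := hdead j k₀
  -- the set of visits of i in [k₀, m'')
  set S : Finset ℕ := (Finset.Ico k₀ m'').filter (fun k => σ k = i) with hS
  have hne : S.Nonempty := ⟨k₀, by simp [hS, hk₀m, hk₀]⟩
  set k' := S.max' hne with hk'
  have hk'mem : k' ∈ S := S.max'_mem hne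
  have hk'i : σ k' = i := (Finset.mem_filter.mp hk'mem).2
  have hk'lt : k' < m'' := (Finset.mem_Ico.mp (Finset.mem_filter.mp hk'mem).1).2
  have hk'ge : k₀ ≤ k' := (Finset.mem_Ico.mp (Finset.mem_filter.mp hk'mem).1).1
  obtain ⟨m₂, hk'm₂, hm₂i, hwsum⟩ := hdead i k'
  -- m₂ must be strictly after m''
  have hm''m₂ : m'' < m₂ := by
    rcases lt_trichotomy m₂ m'' with h | h | h
    · exfalso
      have : m₂ ∈ S := by
        refine Finset.mem_filter.mpr ⟨Finset.mem_Ico.mpr ⟨le_trans hk'ge hk'm₂.le, h⟩, hm₂i⟩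
      exact absurd (S.le_max' m₂ this) (not_le.mpr hk'm₂)
    · exact absurd hm''j (h ▸ hm₂i ▸ hij)
    · exact h
  -- build the shifted walk
  have hWeq : Wsum w (fun l => σ (k' + l)) 0 (m₂ - k') = Wsum w σ k' m₂ := by
    unfold Wsum
    rw [Finset.sum_Ico_eq_sum_range, Finset.sum_Ico_eq_sum_range]
    simp [Nat.add_assoc]
  have hlt := Hi (fun l => σ (k' + l)) (m₂ - k')
    (by omega)
    (fun l _ => by simpa [Nat.add_assoc] using hadj (k' + l))
    (by simpa using hk'i)
    (by simpa [Nat.add_sub_cancel' hk'm₂.le] using hm₂i)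
    ⟨m'' - k', by omega, by simpa [Nat.add_sub_cancel' hk'lt.le] using hm''j⟩
  rw [hWeq] at hlt
  exact absurd hwsum (not_le.mpr hlt)
end
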